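/- Negami splitting for classical reliability: if G is the union of graphs K and H sharing only the vertices U, with independent edge Bernoulli parameters, then R_G = Σ_{γ,γ' ∈ Γ(U)} β_{γ,γ'} R_{K/γ} · R_{H/γ'}, where β is the inverse of the connectivity matrix of the partition lattice Γ(U) and each quotient graph keeps the same edge parameters. -/

import Mathlib

open scoped Classical
noncomputable section

/-- A finite set has finitely many setoids (partitions). -/
instance setoidFinite (U : Type) [Finite U] : Finite (Setoid U) :=
  Finite.of_injective (fun s => s.r)
    (fun _ _ h => Setoid.ext fun x y => iff_of_eq (congrFun (congrFun h x) y))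

noncomputable instance setoidFintype (U : Type) [Finite U] : Fintype (Setoid U) :=
  Fintype.ofFinite _

/-- Adjacency via an operating edge of the state `ε`. -/
def edgeAdj {V E : Type} (s t : E → V) (ε : E → Bool) (x y : V) : Prop :=
  ∃ e, ε e = true ∧ ((s e = x ∧ t e = y) ∨ (s e = y ∧ t e = x))

/-- Connectivity of the spanning subgraph determined by `ε`, on the vertex set `S`,
after further identifying vertices via the relation `σ`. -/
def ConnectedModOn {V E : Type} (S : Set V) (s t : E → V) (σ : V → V → Prop)
    (ε : E → Bool) : Prop :=
  ∀ x ∈ S, ∀ y ∈ S, Relation.EqvGen (fun a b => edgeAdj s t ε a b ∨ σ a b) x y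

/-- A state is connected if the spanning subgraph of operating edges is connected. -/
def ConnectedState {V E : Type} (S : Set V) (s t : E → V) (ε : E → Bool) : Prop :=
  ConnectedModOn S s t (fun _ _ => False) ε

/-- The identification relation on vertices induced by a partition (setoid) `γ` of `U`. -/
def partRel {V : Type} (U : Set V) (γ : Setoid ↥U) : V → V → Prop :=
  fun a b => ∃ (ha : a ∈ U) (hb : b ∈ U), γ.r ⟨a, ha⟩ ⟨b, hb⟩

/-- The state `ε` has no islands: every vertex of `S` is joined to some vertex of `U`. -/
def NoIslands {V E : Type} (S U : Set V) (s t : E → V) (ε : E → Bool) : Prop :=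
  ∀ x ∈ S, ∃ u ∈ U, Relation.EqvGen (edgeAdj s t ε) x u

/-- The partition `P(ε)` of `U` induced by the connected components of the state `ε`. -/
def inducedPart {V E : Type} (U : Set V) (s t : E → V) (ε : E → Bool) : Setoid ↥U :=
  ⟨fun u u' => Relation.EqvGen (edgeAdj s t ε) u.1 u'.1,
    ⟨fun u => Relation.EqvGen.refl u.1,
     fun h => Relation.EqvGen.symm _ _ h,
     fun h h' => Relation.EqvGen.trans _ _ _ h h'⟩⟩

/-- Probability of the classical state `ε` given Bernoulli parameters `p`. -/
def stProb {E : Type} [Fintype E] (p : E → ℝ) (ε : E → Bool) : ℝ :=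
  ∏ e, if ε e then p e else 1 - p e

/-- Reliability: probability that the random state satisfies the connectivity
predicate `Conn`. -/
def relOf {E : Type} [Fintype E] (p : E → ℝ) (Conn : (E → Bool) → Prop) : ℝ :=
  ∑ ε : E → Bool, if Conn ε then stProb p ε else 0

/-- The hermitian inner product of `ℓ²_ℂ(Λ)`, antilinear in the first argument. -/
def qdot {Λ : Type} [Fintype Λ] (x y : Λ → ℂ) : ℂ :=
  ∑ ε, (starRingEnd ℂ) (x ε) * y ε

/-- The orthogonal projection of `ℓ²_ℂ(Λ)` onto the span of `{|ε⟩ : ε ∈ C}`. -/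
def projC {Λ : Type} [Fintype Λ] (C : Set Λ) : (Λ → ℂ) →ₗ[ℂ] (Λ → ℂ) where
  toFun ψ := fun ε => if ε ∈ C then ψ ε else 0
  map_add' x y := by funext ε; by_cases h : ε ∈ C <;> simp [h]
  map_smul' c x := by funext ε; by_cases h : ε ∈ C <;> simp [h]

/-- Tensor product of operators under `ℓ²(Λ₁ × Λ₂) ≅ ℓ²(Λ₁) ⊗ ℓ²(Λ₂)`. -/
def tensorOp {A B : Type} [Fintype A] [Fintype B]
    (F : (A → ℂ) →ₗ[ℂ] (A → ℂ)) (G : (B → ℂ) →ₗ[ℂ] (B → ℂ)) :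
    (A × B → ℂ) →ₗ[ℂ] (A × B → ℂ) where
  toFun ψ := fun q => ∑ x : A × B, ψ x *
    (F (fun a => if a = x.1 then 1 else 0) q.1 * G (fun b => if b = x.2 then 1 else 0) q.2)
  map_add' x y := by
    funext q
    simp [add_mul, Finset.sum_add_distrib]
  map_smul' c x := by
    funext q
    simp only [Pi.smul_apply, smul_eq_mul, RingHom.id_apply]
    rw [Finset.mul_sum]
    exact Finset.sum_congr rfl (fun x _ => by ring)

/-- Tensor product of state vectors. -/
def vtens {A B : Type} (ψ₁ : A → ℂ) (ψ₂ : B → ℂ) : A × B → ℂ :=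
  fun q => ψ₁ q.1 * ψ₂ q.2

/-- Entry of the connectivity matrix: `1` if the common coarsening of the two
partitions has a single block, `0` otherwise.  (In Mathlib's order on `Setoid U`,
the common coarsening is the join `γ ⊔ γ'`, and having a single block means `= ⊤`.) -/
def connMatrix (U : Type) [Finite U] : Matrix (Setoid U) (Setoid U) ℝ :=
  fun γ γ' => if γ ⊔ γ' = ⊤ then 1 else 0

/-! A state `ε = (εK, εH)` of `G` is connected iff neither half has islands (every vertex
reaches the interface `U = VK ∩ VH` inside its own half) and the partitions `P(εK)`, `P(εH)`
that the two halves induce on `U` join to the one-block partition. The point is that,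
since `K` and `H` meet only in `U`, any path of `G` between two vertices of `U` can be cut at
its visits to `U` into pieces lying in one half each, so connectivity of `G` restricted to `U`
is the join `P(εK) ⊔ P(εH)`. In the same way `K/γ` is connected iff `K` has no islands and
`P(εK) ⊔ γ = ⊤`.

Let `a δ` (resp. `b δ`) be the probability that `K` (resp. `H`) has no islands and induces
`δ` on `U`, and `C` the connectivity matrix. By independence of the two halves
`R_G = a ⬝ᵥ C b`, while `R_{K/γ} = (a C)_γ` and `R_{H/γ'} = (b C)_γ'`; hence
`Σ β_{γγ'} R_{K/γ} R_{H/γ'} = a ⬝ᵥ C β C b = a ⬝ᵥ C b` as `C` is symmetric and `C β = 1`. -/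

namespace Setoid

variable {V : Type*}

def SupportedOn (r : Setoid V) (W : Set V) : Prop :=
  ∀ ⦃a b⦄, a ∉ W → r a b → a = b

variable {r s : Setoid V} {U W₁ W₂ : Set V}

lemma SupportedOn.mem_of_ne (hr : r.SupportedOn W₁) {a b : V} (h : r a b) (hab : a ≠ b) :
    a ∈ W₁ :=
  by_contra fun ha => hab (hr ha h)

lemma supportedOn_eqvGen {R : V → V → Prop} (h : ∀ a b, R a b → a ∈ W₁ ∧ b ∈ W₁) :
    (Relation.EqvGen.setoid R).SupportedOn W₁ := by
  intro a b ha hab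
  have hle : Relation.EqvGen.setoid R ≤ ker (· = a) := eqvGen_le fun x y hxy => by
    simp only [ker_def, eq_iff_iff]
    exact iff_of_false (fun hx => ha (hx ▸ (h x y hxy).1)) (fun hy => ha (hy ▸ (h x y hxy).2))
  exact ((ker_def.mp (hle hab)).mp rfl).symm

lemma supportedOn_map_val (γ : Setoid U) : (γ.map Subtype.val).SupportedOn U :=
  supportedOn_eqvGen <| by
    rintro _ _ ⟨x, y, -, rfl, rfl⟩
    exact ⟨x.2, y.2⟩

lemma sup_rel_of_or {x y : V} (h : r x y ∨ s x y) : (r ⊔ s) x y :=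
  h.elim (fun h => (le_sup_left : r ≤ r ⊔ s) h) fun h => (le_sup_right : s ≤ r ⊔ s) h

lemma exists_anchor_of_rel_left (hr : r.SupportedOn W₁) (hs : s.SupportedOn W₂)
    (hU : W₁ ∩ W₂ ⊆ U) {J : Setoid U} (hsJ : s.comap (↑) ≤ J) {y : U} {x x' : V}
    (hxx' : r x x') (h : ∃ w : U, (r x' w ∨ s x' w) ∧ J w y) :
    ∃ w : U, (r x w ∨ s x w) ∧ J w y := by
  obtain ⟨w, hr' | hs', hwy⟩ := h
  · exact ⟨w, Or.inl (r.trans hxx' hr'), hwy⟩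
  by_cases hx : x = x'
  · exact ⟨w, Or.inr (hx ▸ hs'), hwy⟩
  by_cases hw : x' = w
  · exact ⟨w, Or.inl (hw ▸ hxx'), hwy⟩
  have hx'U : x' ∈ U :=
    hU ⟨hr.mem_of_ne (r.symm hxx') (Ne.symm hx), hs.mem_of_ne hs' hw⟩
  exact ⟨⟨x', hx'U⟩, Or.inl hxx', J.trans (hsJ hs') hwy⟩

lemma exists_anchor_of_sup (hr : r.SupportedOn W₁) (hs : s.SupportedOn W₂)
    (hU : W₁ ∩ W₂ ⊆ U) {x : V} {y : U} (h : (r ⊔ s) x y) :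
    ∃ w : U, (r x w ∨ s x w) ∧ (r.comap (↑) ⊔ s.comap (↑)) w y := by
  set J := r.comap ((↑) : U → V) ⊔ s.comap (↑)
  let anchored : V → Prop := fun x => ∃ w : U, (r x w ∨ s x w) ∧ J w y
  -- `anchored` is a union of `r`-classes and a union of `s`-classes, hence of `(r ⊔ s)`-classes.
  have hle : r ⊔ s ≤ ker anchored := by
    refine sup_le (fun a b hab => ker_def.mpr (propext ⟨fun h => ?_, fun h => ?_⟩))
      (fun a b hab => ker_def.mpr (propext ⟨fun h => ?_, fun h => ?_⟩))
    · exact exists_anchor_of_rel_left hr hs hU le_sup_right (r.symm hab) h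
    · exact exists_anchor_of_rel_left hr hs hU le_sup_right hab h
    all_goals
      simp only [anchored, or_comm (a := r _ _)] at h ⊢
      rw [Set.inter_comm] at hU
    · exact exists_anchor_of_rel_left hs hr hU le_sup_left (s.symm hab) h
    · exact exists_anchor_of_rel_left hs hr hU le_sup_left hab h
  exact (ker_def.mp (hle h)).mpr ⟨y, Or.inl (r.refl _), J.refl _⟩

theorem comap_val_sup (hr : r.SupportedOn W₁) (hs : s.SupportedOn W₂)
    (hU : W₁ ∩ W₂ ⊆ U) :
    (r ⊔ s).comap ((↑) : U → V) = r.comap (↑) ⊔ s.comap (↑) := by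
  refine le_antisymm (fun u v h => ?_)
    (sup_le (fun _ _ h => sup_rel_of_or (Or.inl h)) (fun _ _ h => sup_rel_of_or (Or.inr h)))
  obtain ⟨w, huw, hwv⟩ := exists_anchor_of_sup hr hs hU h
  exact Setoid.trans' _ (sup_rel_of_or huw) hwv

theorem forall_sup_iff (hr : r.SupportedOn W₁) (hs : s.SupportedOn W₂)
    (hU : W₁ ∩ W₂ ⊆ U) (hUne : U.Nonempty) {S : Set V} (hUS : U ⊆ S) :
    (∀ x ∈ S, ∀ y ∈ S, (r ⊔ s) x y) ↔
      (∀ x ∈ S, ∃ u : U, r x u ∨ s x u) ∧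
        r.comap (↑) ⊔ s.comap (↑) = (⊤ : Setoid U) := by
  rw [← comap_val_sup hr hs hU, eq_top_iff]
  constructor
  · intro h
    obtain ⟨u₀, hu₀⟩ := hUne
    refine ⟨fun x hx => ?_, fun u v => h u (hUS u.2) v (hUS v.2)⟩
    obtain ⟨w, hw, -⟩ :=
      exists_anchor_of_sup (y := ⟨u₀, hu₀⟩) hr hs hU (h x hx u₀ (hUS hu₀))
    exact ⟨w, hw⟩
  · rintro ⟨hanchor, htop⟩ x hx y hy
    have to_anchor : ∀ z ∈ S, ∃ u : U, (r ⊔ s) z u := fun z hz =>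
      (hanchor z hz).imp fun _ => sup_rel_of_or
    obtain ⟨u, hxu⟩ := to_anchor x hx
    obtain ⟨v, hyv⟩ := to_anchor y hy
    exact (r ⊔ s).trans hxu ((r ⊔ s).trans (htop u v) ((r ⊔ s).symm hyv))

lemma exists_rel_or_iff_left (hs : s.SupportedOn W₂) (hU : W₁ ∩ W₂ ⊆ U) {x : V}
    (hx : x ∈ W₁) :
    (∃ u : U, r x u ∨ s x u) ↔ ∃ u : U, r x u := by
  refine ⟨fun ⟨u, hu⟩ => ?_, fun ⟨u, hu⟩ => ⟨u, Or.inl hu⟩⟩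
  rcases hu with hu | hu
  · exact ⟨u, hu⟩
  by_cases hxu : x = u
  · exact ⟨u, hxu ▸ r.refl x⟩
  · exact ⟨⟨x, hU ⟨hx, hs.mem_of_ne hu hxu⟩⟩, r.refl x⟩

lemma exists_rel_or_iff_right (hr : r.SupportedOn W₁) (hU : W₁ ∩ W₂ ⊆ U) {x : V}
    (hx : x ∈ W₂) :
    (∃ u : U, r x u ∨ s x u) ↔ ∃ u : U, s x u := by
  simp only [or_comm (a := r _ _)]
  exact exists_rel_or_iff_left hr (Set.inter_comm W₁ W₂ ▸ hU) hx

end Setoid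

section Graph

variable {V E : Type}

def reachSetoid (s t : E → V) (ε : E → Bool) : Setoid V :=
  Relation.EqvGen.setoid (edgeAdj s t ε)

variable {s t : E → V} {W U : Set V}

lemma reachSetoid_supportedOn (hW : ∀ e, s e ∈ W ∧ t e ∈ W) (ε : E → Bool) :
    (reachSetoid s t ε).SupportedOn W :=
  Setoid.supportedOn_eqvGen <| by
    rintro _ _ ⟨e, -, ⟨rfl, rfl⟩ | ⟨rfl, rfl⟩⟩
    exacts [hW e, (hW e).symm]

lemma inducedPart_eq_comap (ε : E → Bool) :
    inducedPart U s t ε = (reachSetoid s t ε).comap (↑) := rfl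

lemma noIslands_iff (ε : E → Bool) :
    NoIslands W U s t ε ↔ ∀ x ∈ W, ∃ u : U, reachSetoid s t ε x u := by
  simp only [NoIslands, Subtype.exists, exists_prop]
  rfl

lemma connectedModOn_iff_sup (S : Set V) (σ : V → V → Prop) (ε : E → Bool) :
    ConnectedModOn S s t σ ε ↔
      ∀ x ∈ S, ∀ y ∈ S, (reachSetoid s t ε ⊔ Relation.EqvGen.setoid σ) x y := by
  rw [reachSetoid, ← Setoid.gi.gc.l_sup]
  rfl

lemma connectedState_iff_forall (S : Set V) (ε : E → Bool) :
    ConnectedState S s t ε ↔ ∀ x ∈ S, ∀ y ∈ S, reachSetoid s t ε x y := by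
  simp only [ConnectedState, ConnectedModOn, or_false]
  rfl

lemma eqvGen_partRel (γ : Setoid U) :
    Relation.EqvGen.setoid (partRel U γ) = γ.map (↑) := by
  have : partRel U γ = Relation.Map γ (↑) (↑) := by
    ext a b
    simp [partRel, Relation.Map]
  rw [this]
  rfl

theorem connectedModOn_partRel_iff (hUW : U ⊆ W) (hU : U.Nonempty)
    (hW : ∀ e, s e ∈ W ∧ t e ∈ W) (γ : Setoid U) (ε : E → Bool) :
    ConnectedModOn W s t (partRel U γ) ε ↔
      NoIslands W U s t ε ∧ inducedPart U s t ε ⊔ γ = ⊤ := by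
  have hr := reachSetoid_supportedOn hW ε
  have hs := Setoid.supportedOn_map_val γ
  have hWU : W ∩ U ⊆ U := Set.inter_subset_right
  rw [connectedModOn_iff_sup, eqvGen_partRel, Setoid.forall_sup_iff hr hs hWU hU hUW,
    Setoid.comap_map_eq _ _ Subtype.val_injective, inducedPart_eq_comap, noIslands_iff]
  exact and_congr_left' (forall₂_congr fun x hx => Setoid.exists_rel_or_iff_left hs hWU hx)

end Graph

section TwoGraphs

variable {V EK EH : Type} {sK tK : EK → V} {sH tH : EH → V}

lemma reachSetoid_sumElim (ε : EK ⊕ EH → Bool) :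
    reachSetoid (Sum.elim sK sH) (Sum.elim tK tH) ε =
      reachSetoid sK tK (ε ∘ Sum.inl) ⊔ reachSetoid sH tH (ε ∘ Sum.inr) := by
  rw [reachSetoid, reachSetoid, reachSetoid, ← Setoid.gi.gc.l_sup]
  congr
  ext a b
  simp [edgeAdj]

theorem connectedState_sumElim_iff {VK VH : Set V} (hcover : VK ∪ VH = Set.univ)
    (hU : (VK ∩ VH).Nonempty) (hK : ∀ e, sK e ∈ VK ∧ tK e ∈ VK)
    (hH : ∀ e, sH e ∈ VH ∧ tH e ∈ VH) (ε : EK ⊕ EH → Bool) :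
    ConnectedState Set.univ (Sum.elim sK sH) (Sum.elim tK tH) ε ↔
      (NoIslands VK (VK ∩ VH) sK tK (ε ∘ Sum.inl) ∧
        NoIslands VH (VK ∩ VH) sH tH (ε ∘ Sum.inr)) ∧
      inducedPart (VK ∩ VH) sK tK (ε ∘ Sum.inl) ⊔
        inducedPart (VK ∩ VH) sH tH (ε ∘ Sum.inr) = ⊤ := by
  have hr := reachSetoid_supportedOn hK (ε ∘ Sum.inl)
  have hs := reachSetoid_supportedOn hH (ε ∘ Sum.inr)
  rw [connectedState_iff_forall, reachSetoid_sumElim,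
    Setoid.forall_sup_iff hr hs subset_rfl hU (Set.subset_univ _), inducedPart_eq_comap,
    inducedPart_eq_comap, noIslands_iff, noIslands_iff]
  refine and_congr_left'
    ⟨fun h => ⟨fun x hx => ?_, fun x hx => ?_⟩, fun ⟨hK', hH'⟩ x _ => ?_⟩
  · exact (Setoid.exists_rel_or_iff_left hs subset_rfl hx).mp (h x trivial)
  · exact (Setoid.exists_rel_or_iff_right hr subset_rfl hx).mp (h x trivial)
  · rcases (hcover.symm ▸ Set.mem_univ x : x ∈ VK ∪ VH) with hx | hx
    · exact (Setoid.exists_rel_or_iff_left hs subset_rfl hx).mpr (hK' x hx)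
    · exact (Setoid.exists_rel_or_iff_right hr subset_rfl hx).mpr (hH' x hx)

end TwoGraphs

lemma relOf_and_comp {E S : Type} [Fintype E] [Fintype S] (p : E → ℝ)
    (P : (E → Bool) → Prop) (f : (E → Bool) → S) (Φ : S → Prop) :
    relOf p (fun ε => P ε ∧ Φ (f ε)) =
      ∑ δ, (if Φ δ then (1 : ℝ) else 0) * relOf p (fun ε => P ε ∧ f ε = δ) := by
  simp only [relOf, Finset.mul_sum]
  rw [Finset.sum_comm]
  refine Finset.sum_congr rfl fun ε _ => ?_
  by_cases hP : P ε <;> simp [hP]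

lemma relOf_sumElim {EK EH : Type} [Fintype EK] [Fintype EH] (pK : EK → ℝ) (pH : EH → ℝ)
    (PK : (EK → Bool) → Prop) (PH : (EH → Bool) → Prop) :
    relOf (Sum.elim pK pH) (fun ε => PK (ε ∘ Sum.inl) ∧ PH (ε ∘ Sum.inr)) =
      relOf pK PK * relOf pH PH := by
  simp only [relOf, Fintype.sum_mul_sum, ite_zero_mul_ite_zero]
  rw [← Fintype.sum_prod_type'
    fun x y => if PK x ∧ PH y then stProb pK x * stProb pH y else 0]
  refine Finset.sum_equiv (Equiv.sumArrowEquivProdArrow EK EH Bool) (by simp) fun ε _ => ?_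
  simp only [stProb, Fintype.prod_sum_type]
  congr 1

open Matrix

def islandFreeProb {V E : Type} [Fintype E] (W U : Set V) (s t : E → V) (p : E → ℝ)
    (δ : Setoid U) : ℝ :=
  relOf p fun ε => NoIslands W U s t ε ∧ inducedPart U s t ε = δ

theorem relOf_connectedModOn_partRel {V E : Type} [Finite V] [Fintype E] {W U : Set V}
    (hUW : U ⊆ W) (hU : U.Nonempty) {s t : E → V} (hW : ∀ e, s e ∈ W ∧ t e ∈ W)
    (p : E → ℝ) (γ : Setoid U) :
    relOf p (ConnectedModOn W s t (partRel U γ)) =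
      (islandFreeProb W U s t p ᵥ* connMatrix U) γ := by
  have hconn : ConnectedModOn W s t (partRel U γ) =
      fun ε => NoIslands W U s t ε ∧ (fun δ => δ ⊔ γ = ⊤) (inducedPart U s t ε) :=
    funext fun ε => propext (connectedModOn_partRel_iff hUW hU hW γ ε)
  rw [hconn, relOf_and_comp p _ _ fun δ => δ ⊔ γ = ⊤]
  exact Finset.sum_congr rfl fun δ _ => mul_comm _ _

theorem relOf_connectedState_sumElim {V EK EH : Type} [Finite V] [Fintype EK] [Fintype EH]
    {VK VH : Set V} (hcover : VK ∪ VH = Set.univ) (hU : (VK ∩ VH).Nonempty)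
    {sK tK : EK → V} (hK : ∀ e, sK e ∈ VK ∧ tK e ∈ VK)
    {sH tH : EH → V} (hH : ∀ e, sH e ∈ VH ∧ tH e ∈ VH) (pK : EK → ℝ) (pH : EH → ℝ) :
    relOf (Sum.elim pK pH) (ConnectedState Set.univ (Sum.elim sK sH) (Sum.elim tK tH)) =
      islandFreeProb VK (VK ∩ VH) sK tK pK ⬝ᵥ
        (connMatrix ↥(VK ∩ VH) *ᵥ islandFreeProb VH (VK ∩ VH) sH tH pH) := by
  set U := VK ∩ VH
  have hconn : ConnectedState Set.univ (Sum.elim sK sH) (Sum.elim tK tH) =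
      fun ε => (NoIslands VK U sK tK (ε ∘ Sum.inl) ∧ NoIslands VH U sH tH (ε ∘ Sum.inr)) ∧
        (fun δ : Setoid U × Setoid U => δ.1 ⊔ δ.2 = ⊤)
          (inducedPart U sK tK (ε ∘ Sum.inl), inducedPart U sH tH (ε ∘ Sum.inr)) :=
    funext fun ε => propext (connectedState_sumElim_iff hcover hU hK hH ε)
  have hsplit : ∀ δ : Setoid U × Setoid U,
      relOf (Sum.elim pK pH) (fun ε =>
        (NoIslands VK U sK tK (ε ∘ Sum.inl) ∧ NoIslands VH U sH tH (ε ∘ Sum.inr)) ∧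
          (inducedPart U sK tK (ε ∘ Sum.inl), inducedPart U sH tH (ε ∘ Sum.inr)) = δ) =
      islandFreeProb VK U sK tK pK δ.1 * islandFreeProb VH U sH tH pH δ.2 := fun δ => by
    rw [islandFreeProb, islandFreeProb, ← relOf_sumElim]
    congr
    ext ε
    rw [Prod.ext_iff]
    tauto
  rw [hconn, relOf_and_comp (Sum.elim pK pH) _ _ fun δ : Setoid U × Setoid U => δ.1 ⊔ δ.2 = ⊤]
  rw [Fintype.sum_prod_type]
  simp only [hsplit, dotProduct, mulVec, Finset.mul_sum, connMatrix]
  refine Finset.sum_congr rfl fun δ _ => Finset.sum_congr rfl fun δ' _ => ?_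
  ring

lemma connMatrix_isSymm (U : Type) [Finite U] : (connMatrix U).IsSymm := by
  ext γ γ'
  simp [connMatrix, sup_comm]

lemma Matrix.sum_sum_mul_eq_dotProduct_mulVec {n R : Type*} [Fintype n] [CommSemiring R]
    (M : Matrix n n R) (x y : n → R) : ∑ i, ∑ j, M i j * x i * y j = x ⬝ᵥ (M *ᵥ y) := by
  simp only [dotProduct, mulVec, Finset.mul_sum]
  exact Finset.sum_congr rfl fun i _ => Finset.sum_congr rfl fun j _ => by ring

lemma Matrix.vecMul_dotProduct_mulVec_vecMul {n R : Type*} [Fintype n] [DecidableEq n]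
    [CommSemiring R] {C β : Matrix n n R} (hC : C.IsSymm) (hCβ : C * β = 1) (x y : n → R) :
    (x ᵥ* C) ⬝ᵥ (β *ᵥ (y ᵥ* C)) = x ⬝ᵥ (C *ᵥ y) := by
  rw [← dotProduct_mulVec, mulVec_mulVec, hCβ, one_mulVec, ← vecMul_transpose, hC]

theorem classical_negami_splitting_general {V EK EH : Type}
    [Fintype V] [Fintype EK] [Fintype EH]
    (VK VH : Set V) (hcover : VK ∪ VH = Set.univ) (hU : (VK ∩ VH).Nonempty)
    (sK tK : EK → V) (hK : ∀ e, sK e ∈ VK ∧ tK e ∈ VK)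
    (sH tH : EH → V) (hH : ∀ e, sH e ∈ VH ∧ tH e ∈ VH)
    (pK : EK → ℝ) (pH : EH → ℝ)
    (β : Matrix (Setoid ↥(VK ∩ VH)) (Setoid ↥(VK ∩ VH)) ℝ)
    (hβ : β * connMatrix ↥(VK ∩ VH) = 1 ∧ connMatrix ↥(VK ∩ VH) * β = 1) :
    relOf (Sum.elim pK pH)
        (ConnectedState Set.univ (Sum.elim sK sH) (Sum.elim tK tH))
      = ∑ γ : Setoid ↥(VK ∩ VH), ∑ γ' : Setoid ↥(VK ∩ VH),
          β γ γ' *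
            relOf pK (ConnectedModOn VK sK tK (partRel (VK ∩ VH) γ)) *
            relOf pH (ConnectedModOn VH sH tH (partRel (VK ∩ VH) γ')) := by
  simp only [relOf_connectedModOn_partRel Set.inter_subset_left hU hK,
    relOf_connectedModOn_partRel Set.inter_subset_right hU hH]
  rw [Matrix.sum_sum_mul_eq_dotProduct_mulVec,
    Matrix.vecMul_dotProduct_mulVec_vecMul (connMatrix_isSymm _) hβ.2,
    relOf_connectedState_sumElim hcover hU hK hH]

/-- Negami splitting for the classical reliability,
`R_G = Σ_{γ,γ'} β_{γ,γ'} R_{K/γ} · R_{H/γ'}`. -/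
theorem classical_negami_splitting {V EK EH : Type}
    [Fintype V] [Fintype EK] [Fintype EH]
    (VK VH : Set V) (hcover : VK ∪ VH = Set.univ) (hU : (VK ∩ VH).Nonempty)
    (sK tK : EK → V) (hK : ∀ e, sK e ∈ VK ∧ tK e ∈ VK)
    (sH tH : EH → V) (hH : ∀ e, sH e ∈ VH ∧ tH e ∈ VH)
    (pK : EK → ℝ) (pH : EH → ℝ)
    (hpK : ∀ e, pK e ∈ Set.Icc (0:ℝ) 1) (hpH : ∀ e, pH e ∈ Set.Icc (0:ℝ) 1)
    (β : Matrix (Setoid ↥(VK ∩ VH)) (Setoid ↥(VK ∩ VH)) ℝ)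
    (hβ : β * connMatrix ↥(VK ∩ VH) = 1 ∧ connMatrix ↥(VK ∩ VH) * β = 1) :
    relOf (Sum.elim pK pH)
        (ConnectedState Set.univ (Sum.elim sK sH) (Sum.elim tK tH))
      = ∑ γ : Setoid ↥(VK ∩ VH), ∑ γ' : Setoid ↥(VK ∩ VH),
          β γ γ' *
            relOf pK (ConnectedModOn VK sK tK (partRel (VK ∩ VH) γ)) *
            relOf pH (ConnectedModOn VH sH tH (partRel (VK ∩ VH) γ')) :=
  classical_negami_splitting_general VK VH hcover hU sK tK hK sH tH hH pK pH β hβ
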